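/- Fix q ∈ (0,1) and λ > 0 with λ + 1 − q ≠ 0, let ρ(u) = log_q(u) = (u^{1−q}−1)/(1−q) and τ(u) = log_{1−λ}(u) = (u^λ − 1)/λ, and let f be a differentiable convex function with f′ = τ ∘ ρ⁻¹ given explicitly by f(r) = (1/(λ(λ+1−q))) exp_q(r)^{λ+1−q} − (1/λ) r − 1/(λ(λ+1−q)). Then for a, b > 0, D_f(ρ(a), ρ(b)) = (1/(λ(1−q)(λ+1−q)))·[(1−q) a^{λ+1−q} + λ b^{λ+1−q} − (λ+1−q) a^λ b^{1−q}], the pointwise Cichocki–Amari (α,β)-divergence integrand, and this is nonnegative. -/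

import Mathlib

noncomputable def logq (q u : ℝ) : ℝ := (u ^ (1 - q) - 1) / (1 - q)

noncomputable def expq (q t : ℝ) : ℝ := (max (1 + (1 - q) * t) 0) ^ (1 / (1 - q))

/-- Scalar Bregman divergence generated by `f`. -/
noncomputable def breg (f : ℝ → ℝ) (a b : ℝ) : ℝ := f a - f b - (a - b) * deriv f b

/-!
Because `exp_q` inverts `log_q` on `(0, ∞)`, the generator has derivative `τ ∘ ρ⁻¹`, so at
`ρ(b)` its slope is `log_{1-λ} b`, and the Bregman divergence becomes a polynomial expression in
`a^{1-q}`, `b^{1-q}` and `b^λ`. Nonnegativity is the weighted AM–GM inequality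
`(α + β) x^α y^β ≤ α x^{α+β} + β y^{α+β}` with `α = 1 - q`, `β = λ`.
-/

section
variable {q : ℝ}

lemma one_add_mul_logq (hq : q ≠ 1) (u : ℝ) :
    1 + (1 - q) * logq q u = u ^ (1 - q) := by
  have : 1 - q ≠ 0 := sub_ne_zero.2 hq.symm
  rw [logq]; field_simp; ring

lemma expq_rpow_of_pos {r : ℝ} (hr : 0 < 1 + (1 - q) * r) (p : ℝ) :
    expq q r ^ p = (1 + (1 - q) * r) ^ (p / (1 - q)) := by
  rw [expq, max_eq_left hr.le, ← Real.rpow_mul hr.le, one_div_mul_eq_div]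

lemma expq_logq (hq : q ≠ 1) {u : ℝ} (hu : 0 < u) : expq q (logq q u) = u := by
  have : 1 - q ≠ 0 := sub_ne_zero.2 hq.symm
  have hpos : 0 < 1 + (1 - q) * logq q u := by
    rw [one_add_mul_logq hq u]; positivity
  rw [← Real.rpow_one (expq q _), expq_rpow_of_pos hpos, one_add_mul_logq hq u,
    ← Real.rpow_mul hu.le, mul_one_div_cancel this, Real.rpow_one]

lemma hasDerivAt_expq_rpow (hq : q ≠ 1) {r : ℝ} (hr : 0 < 1 + (1 - q) * r) (p : ℝ) :
    HasDerivAt (fun s => expq q s ^ p) (p * expq q r ^ (p - (1 - q))) r := by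
  have : 1 - q ≠ 0 := sub_ne_zero.2 hq.symm
  have hlin : HasDerivAt (fun s : ℝ => 1 + (1 - q) * s) (1 - q) r := by
    simpa using ((hasDerivAt_id r).const_mul (1 - q)).const_add 1
  have hev : (fun s => expq q s ^ p) =ᶠ[nhds r] fun s => (1 + (1 - q) * s) ^ (p / (1 - q)) := by
    have hopen : IsOpen {s : ℝ | 0 < 1 + (1 - q) * s} :=
      isOpen_lt continuous_const (by fun_prop)
    filter_upwards [hopen.mem_nhds hr] with s hs using expq_rpow_of_pos hs p
  refine ((hlin.rpow_const (Or.inl hr.ne')).congr_of_eventuallyEq hev).congr_deriv ?_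
  rw [expq_rpow_of_pos hr]
  field_simp
end

lemma deriv_generator_logq {q lam : ℝ} (hq : q ≠ 1) (hlam : lam ≠ 0) (hp : lam + 1 - q ≠ 0)
    {b : ℝ} (hb : 0 < b) :
    deriv (fun r => (1 / (lam * (lam + 1 - q))) * expq q r ^ (lam + 1 - q) -
        (1 / lam) * r - 1 / (lam * (lam + 1 - q))) (logq q b) = logq (1 - lam) b := by
  have hpos : 0 < 1 + (1 - q) * logq q b := by
    rw [one_add_mul_logq hq b]; positivity
  have hderiv : HasDerivAt (fun r => (1 / (lam * (lam + 1 - q))) * expq q r ^ (lam + 1 - q) -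
      (1 / lam) * r - 1 / (lam * (lam + 1 - q)))
      ((1 / (lam * (lam + 1 - q))) * ((lam + 1 - q) * expq q (logq q b) ^ (lam + 1 - q - (1 - q)))
        - 1 / lam) (logq q b) :=
    (((hasDerivAt_expq_rpow hq hpos _).const_mul _).sub
      ((hasDerivAt_id' _).const_mul _ |>.congr_deriv (mul_one _))).sub_const _
  rw [hderiv.deriv, expq_logq hq hb, logq, sub_sub_cancel,
    show lam + 1 - q - (1 - q) = lam by ring]
  field_simp

lemma mul_rpow_mul_rpow_le {α β a b : ℝ} (hα : 0 ≤ α) (hβ : 0 ≤ β) (hαβ : 0 < α + β)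
    (ha : 0 ≤ a) (hb : 0 ≤ b) :
    (α + β) * (a ^ α * b ^ β) ≤ α * a ^ (α + β) + β * b ^ (α + β) := by
  have hgm := Real.geom_mean_le_arith_mean2_weighted (div_nonneg hα hαβ.le)
    (div_nonneg hβ hαβ.le) (Real.rpow_nonneg ha (α + β)) (Real.rpow_nonneg hb (α + β))
    (by field_simp)
  rw [← Real.rpow_mul ha, ← Real.rpow_mul hb, mul_div_cancel₀ _ hαβ.ne',
    mul_div_cancel₀ _ hαβ.ne'] at hgm
  calc (α + β) * (a ^ α * b ^ β)
      ≤ (α + β) * (α / (α + β) * a ^ (α + β) + β / (α + β) * b ^ (α + β)) :=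
        mul_le_mul_of_nonneg_left hgm hαβ.le
    _ = α * a ^ (α + β) + β * b ^ (α + β) := by field_simp

theorem breg_logq_eq_cichocki_amari_integrand_general (q lam : ℝ)
    (hq : q ∈ Set.Ioo (0:ℝ) 1) (hlam : 0 < lam)
    (a b : ℝ) (ha : 0 < a) (hb : 0 < b) :
    breg (fun r => (1 / (lam * (lam + 1 - q))) * expq q r ^ (lam + 1 - q) -
        (1 / lam) * r - 1 / (lam * (lam + 1 - q))) (logq q a) (logq q b) =
      (1 / (lam * (1 - q) * (lam + 1 - q))) *
        ((1 - q) * a ^ (lam + 1 - q) + lam * b ^ (lam + 1 - q) -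
          (lam + 1 - q) * (a ^ (1 - q) * b ^ lam)) ∧
    0 ≤ (1 / (lam * (1 - q) * (lam + 1 - q))) *
        ((1 - q) * a ^ (lam + 1 - q) + lam * b ^ (lam + 1 - q) -
          (lam + 1 - q) * (a ^ (1 - q) * b ^ lam)) := by
  have h1q : 0 < 1 - q := sub_pos.2 hq.2
  have hp : 0 < lam + 1 - q := by linarith
  have hsplit : b ^ (lam + 1 - q) = b ^ lam * b ^ (1 - q) := by
    rw [← Real.rpow_add hb]; ring_nf
  refine ⟨?_, mul_nonneg (by positivity) (sub_nonneg.2 ?_)⟩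
  · rw [breg, deriv_generator_logq hq.2.ne hlam.ne' hp.ne' hb,
      expq_logq hq.2.ne ha, expq_logq hq.2.ne hb, hsplit]
    simp only [logq, sub_sub_cancel]
    field_simp
    ring
  · have hamgm := mul_rpow_mul_rpow_le h1q.le hlam.le (by linarith) ha.le hb.le
    rwa [show 1 - q + lam = lam + 1 - q by ring] at hamgm

/-- The rho-tau Bregman divergence with `ρ = log_q`, `τ = log_{1−λ}` and generator
`f(r) = exp_q(r)^{λ+1−q}/(λ(λ+1−q)) − r/λ − 1/(λ(λ+1−q))` equals the pointwise
Cichocki–Amari (α,β)-divergence integrand, which is nonnegative. -/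
theorem breg_logq_eq_cichocki_amari_integrand (q lam : ℝ)
    (hq : q ∈ Set.Ioo (0:ℝ) 1) (hlam : 0 < lam) (hne : lam + 1 - q ≠ 0)
    (a b : ℝ) (ha : 0 < a) (hb : 0 < b) :
    breg (fun r => (1 / (lam * (lam + 1 - q))) * expq q r ^ (lam + 1 - q) -
        (1 / lam) * r - 1 / (lam * (lam + 1 - q))) (logq q a) (logq q b) =
      (1 / (lam * (1 - q) * (lam + 1 - q))) *
        ((1 - q) * a ^ (lam + 1 - q) + lam * b ^ (lam + 1 - q) -
          (lam + 1 - q) * (a ^ (1 - q) * b ^ lam)) ∧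
    0 ≤ (1 / (lam * (1 - q) * (lam + 1 - q))) *
        ((1 - q) * a ^ (lam + 1 - q) + lam * b ^ (lam + 1 - q) -
          (lam + 1 - q) * (a ^ (1 - q) * b ^ lam)) :=
  breg_logq_eq_cichocki_amari_integrand_general q lam hq hlam a b ha hb
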